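/- arXiv:1412.8604 — 5 statements merged into one kernel-verified Lean document; each statement's English description precedes it below -/
import Mathlib

section
/- Assume Φ : X → ℝ is nonnegative and locally Lipschitz continuous: for every r > 0 there exists L_r > 0 such that |Φ(z₁) − Φ(z₂)| ≤ L_r ‖z₁ − z₂‖_X whenever ‖z₁‖_X < r and ‖z₂‖_X < r. Then there exists a constant L > 0 such that for every n ∈ ℕ and every x ∈ X minimizing J over X (J(x) ≤ J(z) for all z ∈ X), the truncation x_n = Σ_{k=1}^n ⟨x, e_k⟩ e_k satisfies ‖x − x_n‖_X ≤ L √(λ*_n), where λ*_n = sup_{k > n} λ_k. -/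
open scoped RealInnerProductSpace BigOperators

/-- Theorem 3.2: If `Φ` is nonnegative and locally Lipschitz, then there is
a constant `L > 0` such that for every `n` and every minimizer `x` of
`J(x) = Φ(Q^{1/2} x) + ‖x‖²`, the K-L truncation `x_n = ∑_{k<n} ⟪x, e k⟫ • e k`
satisfies `‖x - x_n‖ ≤ L √(λ*_n)` with `λ*_n = sup_{k ≥ n} λ_k`.
Here `(e k)` is a complete orthonormal basis of eigenvectors of the positive
trace-class operator `Q` with nonnegative summable eigenvalues `λ_k`, and
`S = Q^{1/2}` its positive square root, `S e_k = √λ_k e_k`. -/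
theorem KL_truncation_error_bound
    {X : Type*} [NormedAddCommGroup X] [InnerProductSpace ℝ X] [CompleteSpace X]
    (e : HilbertBasis ℕ ℝ X) (lam : ℕ → ℝ)
    (hlam_nonneg : ∀ k, 0 ≤ lam k) (hlam_sum : Summable lam)
    (Q S : X →L[ℝ] X)
    (hQ : ∀ k, Q (e k) = lam k • e k)
    (hS : ∀ k, S (e k) = Real.sqrt (lam k) • e k)
    (Φ : X → ℝ)
    (hΦ_nonneg : ∀ z : X, 0 ≤ Φ z)
    (hΦ_lip : ∀ r : ℝ, 0 < r → ∃ Lr : ℝ, 0 < Lr ∧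
      ∀ z₁ z₂ : X, ‖z₁‖ < r → ‖z₂‖ < r → |Φ z₁ - Φ z₂| ≤ Lr * ‖z₁ - z₂‖)
    (J : X → ℝ) (hJ : ∀ x : X, J x = Φ (S x) + ‖x‖ ^ 2) :
    ∃ L : ℝ, 0 < L ∧ ∀ n : ℕ, ∀ x : X, (∀ z : X, J x ≤ J z) →
      ‖x - ∑ k ∈ Finset.range n, ⟪x, e k⟫ • e k‖ ≤ L * Real.sqrt (⨆ k : ℕ, lam (n + k)) := by
  -- the action of S on inner products with basis vectors
  have horth : ∀ i j : ℕ, ⟪e i, e j⟫ = if i = j then (1:ℝ) else 0 :=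
    fun i j => orthonormal_iff_ite.mp e.orthonormal i j
  have key : ∀ (v : X) (j : ℕ), ⟪e j, S v⟫ = Real.sqrt (lam j) * ⟪e j, v⟫ := by
    intro v j
    have h1 : HasSum (fun i => e.repr v i • e i) v := e.hasSum_repr v
    have h2 : HasSum (fun i => (e.repr v i : ℝ) * ⟪e j, S (e i)⟫) ⟪e j, S v⟫ := by
      simpa using (h1.mapL S).mapL (innerSL ℝ (e j))
    have h3 : (fun i => (e.repr v i : ℝ) * ⟪e j, S (e i)⟫)
        = fun i => if i = j then Real.sqrt (lam j) * e.repr v j else 0 := by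
      funext i
      rw [hS, inner_smul_right, horth]
      by_cases h : i = j
      · subst h; simp [mul_comm]
      · rw [if_neg (fun h' : j = i => h h'.symm), mul_zero, mul_zero, if_neg h]
    rw [h3] at h2
    have h4 := hasSum_ite_eq j (Real.sqrt (lam j) * e.repr v j)
    have := h2.unique h4
    rw [this, e.repr_apply_apply]
  -- main proof
  obtain ⟨Lr, hLr, hlip⟩ := hΦ_lip (‖S‖ * Real.sqrt (Φ 0) + 1) (by positivity)
  refine ⟨Lr, hLr, ?_⟩
  intro n x hmin
  set xn := ∑ k ∈ Finset.range n, ⟪x, e k⟫ • e k with hxn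
  set y := x - xn with hy
  set lamS := ⨆ k : ℕ, lam (n + k) with hlamS
  -- boundedness of the tail sup
  have hbdd : BddAbove (Set.range fun k => lam (n + k)) := by
    refine ⟨∑' k, lam k, ?_⟩
    rintro _ ⟨k, rfl⟩
    exact Summable.le_tsum hlam_sum (n + k) fun _ _ => hlam_nonneg _
  have hlamS_nonneg : 0 ≤ lamS := le_trans (hlam_nonneg n) (by simpa using le_ciSup hbdd 0)
  have hlam_le : ∀ i, n ≤ i → lam i ≤ lamS := by
    intro i hi
    have : lam (n + (i - n)) ≤ lamS := le_ciSup hbdd (i - n)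
    rwa [Nat.add_sub_cancel' hi] at this
  -- inner products of e i with xn and y
  have hexn : ∀ i, ⟪e i, xn⟫ = if i ∈ Finset.range n then ⟪e i, x⟫ else 0 := by
    intro i
    rw [hxn, inner_sum]
    have : ∀ k ∈ Finset.range n, ⟪e i, ⟪x, e k⟫ • e k⟫
        = if i = k then ⟪e i, x⟫ else 0 := by
      intro k _
      rw [inner_smul_right, horth]
      by_cases h : i = k
      · subst h; rw [if_pos rfl, if_pos rfl, mul_one, real_inner_comm]
      · rw [if_neg h, mul_zero, if_neg h]
    rw [Finset.sum_congr rfl this, Finset.sum_ite_eq]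
  have hey : ∀ i, i < n → ⟪e i, y⟫ = 0 := by
    intro i hi
    rw [hy, inner_sub_right, hexn, if_pos (Finset.mem_range.mpr hi), sub_self]
  -- Pythagoras
  have hxny : ⟪xn, y⟫ = 0 := by
    rw [hxn, sum_inner]
    refine Finset.sum_eq_zero fun k hk => ?_
    rw [real_inner_smul_left, real_inner_comm, hey k (Finset.mem_range.mp hk), mul_zero]
  have hpyth : ‖x‖ ^ 2 = ‖xn‖ ^ 2 + ‖y‖ ^ 2 := by
    have : x = xn + y := by rw [hy]; abel
    rw [this, norm_add_sq_real, hxny]; ring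
  -- norm bound on x
  have hx0 : ‖x‖ ^ 2 ≤ Φ 0 := by
    have := hmin 0
    rw [hJ, hJ, map_zero] at this
    have h0 := hΦ_nonneg (S x)
    simp only [norm_zero] at this
    nlinarith
  have hxR : ‖x‖ ≤ Real.sqrt (Φ 0) := by
    rw [show Φ 0 = Real.sqrt (Φ 0) ^ 2 from (Real.sq_sqrt (hΦ_nonneg 0)).symm] at hx0
    nlinarith [norm_nonneg x, Real.sqrt_nonneg (Φ 0)]
  have hxnR : ‖xn‖ ≤ Real.sqrt (Φ 0) := by
    nlinarith [norm_nonneg xn, norm_nonneg x, sq_nonneg (‖y‖)]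
  -- Lipschitz bound
  have hSx : ‖S x‖ < ‖S‖ * Real.sqrt (Φ 0) + 1 := by
    have := S.le_opNorm x
    have := mul_le_mul_of_nonneg_left hxR (norm_nonneg S)
    linarith
  have hSxn : ‖S xn‖ < ‖S‖ * Real.sqrt (Φ 0) + 1 := by
    have := S.le_opNorm xn
    have := mul_le_mul_of_nonneg_left hxnR (norm_nonneg S)
    linarith
  have hdiff : ‖y‖ ^ 2 ≤ Lr * ‖S y‖ := by
    have hm := hmin xn
    rw [hJ, hJ] at hm
    have hl := hlip (S xn) (S x) hSxn hSx
    have : Φ (S xn) - Φ (S x) ≤ Lr * ‖S xn - S x‖ := le_trans (le_abs_self _) hl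
    have hnorm : ‖S xn - S x‖ = ‖S y‖ := by
      rw [show S xn - S x = -(S y) by rw [hy, map_sub]; abel, norm_neg]
    rw [hnorm] at this
    nlinarith
  -- spectral bound : ‖S y‖² ≤ lamS * ‖y‖²
  have hSy2 : ‖S y‖ ^ 2 ≤ lamS * ‖y‖ ^ 2 := by
    have hA : HasSum (fun i => ⟪S y, e i⟫ * ⟪e i, S y⟫) ⟪S y, S y⟫ :=
      e.hasSum_inner_mul_inner (S y) (S y)
    have hB : HasSum (fun i => lamS * (⟪y, e i⟫ * ⟪e i, y⟫)) (lamS * ⟪y, y⟫) :=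
      (e.hasSum_inner_mul_inner y y).mul_left lamS
    have hterm : ∀ i, ⟪S y, e i⟫ * ⟪e i, S y⟫ ≤ lamS * (⟪y, e i⟫ * ⟪e i, y⟫) := by
      intro i
      have hc : ⟪S y, e i⟫ = ⟪e i, S y⟫ := real_inner_comm _ _
      have hc2 : ⟪y, e i⟫ = ⟪e i, y⟫ := real_inner_comm _ _
      rw [hc, hc2, key]
      by_cases h : i < n
      · rw [hey i h]; simp
      · have h1 := hlam_le i (not_lt.mp h)
        have h2 := hlam_nonneg i
        have h3 : (Real.sqrt (lam i) * ⟪e i, y⟫) * (Real.sqrt (lam i) * ⟪e i, y⟫)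
            = lam i * (⟪e i, y⟫ * ⟪e i, y⟫) := by
          rw [show (Real.sqrt (lam i) * ⟪e i, y⟫) * (Real.sqrt (lam i) * ⟪e i, y⟫)
              = (Real.sqrt (lam i) * Real.sqrt (lam i)) * (⟪e i, y⟫ * ⟪e i, y⟫) by ring,
            Real.mul_self_sqrt h2]
        rw [h3]
        exact mul_le_mul_of_nonneg_right h1 (mul_self_nonneg _)
    have := hasSum_le hterm hA hB
    rwa [real_inner_self_eq_norm_sq, real_inner_self_eq_norm_sq] at this
  have hSy : ‖S y‖ ≤ Real.sqrt lamS * ‖y‖ := by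
    have := Real.sqrt_le_sqrt hSy2
    rwa [Real.sqrt_sq (norm_nonneg _), Real.sqrt_mul hlamS_nonneg,
      Real.sqrt_sq (norm_nonneg _)] at this
  -- conclude
  have hfinal : ‖y‖ ^ 2 ≤ Lr * (Real.sqrt lamS * ‖y‖) := by
    calc ‖y‖ ^ 2 ≤ Lr * ‖S y‖ := hdiff
    _ ≤ Lr * (Real.sqrt lamS * ‖y‖) := by
        exact mul_le_mul_of_nonneg_left hSy (le_of_lt hLr)
  rcases eq_or_lt_of_le (norm_nonneg y) with h0 | h0
  · rw [← h0]; positivity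
  · nlinarith
end

section
/- Let x ∈ X minimize J over X and let x_n = Σ_{k=1}^n ⟨x, e_k⟩ e_k. Suppose L > 0 is such that Φ is Lipschitz with constant L on a ball containing Q^{1/2} x and Q^{1/2} x_n, i.e. |Φ(Q^{1/2} x) − Φ(Q^{1/2} x_n)| ≤ L ‖Q^{1/2} x − Q^{1/2} x_n‖_X. Then ‖x − x_n‖_X ≤ L √(λ*_n), where λ*_n = sup_{k > n} λ_k. -/
open scoped RealInnerProductSpace BigOperators

/-- Let `x` minimize `J(x) = Φ(Q^{1/2} x) + ‖x‖²` over `X` and let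
`x_n = ∑_{k<n} ⟪x, e k⟫ • e k`. If `L > 0` is such that
`|Φ(Q^{1/2} x) − Φ(Q^{1/2} x_n)| ≤ L ‖Q^{1/2} x − Q^{1/2} x_n‖`, then
`‖x − x_n‖ ≤ L √(λ*_n)` with `λ*_n = sup_{k ≥ n} λ_k`. -/
theorem KL_truncation_error_bound_of_lipschitz_const
    {X : Type*} [NormedAddCommGroup X] [InnerProductSpace ℝ X] [CompleteSpace X]
    (e : HilbertBasis ℕ ℝ X) (lam : ℕ → ℝ)
    (hlam_nonneg : ∀ k, 0 ≤ lam k) (hlam_sum : Summable lam)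
    (Q S : X →L[ℝ] X)
    (hQ : ∀ k, Q (e k) = lam k • e k)
    (hS : ∀ k, S (e k) = Real.sqrt (lam k) • e k)
    (Φ : X → ℝ)
    (J : X → ℝ) (hJ : ∀ z : X, J z = Φ (S z) + ‖z‖ ^ 2)
    (x : X) (hmin : ∀ z : X, J x ≤ J z) (n : ℕ)
    (L : ℝ) (hL : 0 < L)
    (hLip : |Φ (S x) - Φ (S (∑ k ∈ Finset.range n, ⟪x, e k⟫ • e k))| ≤
      L * ‖S x - S (∑ k ∈ Finset.range n, ⟪x, e k⟫ • e k)‖) :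
    ‖x - ∑ k ∈ Finset.range n, ⟪x, e k⟫ • e k‖ ≤ L * Real.sqrt (⨆ k : ℕ, lam (n + k)) := by
  set xn : X := ∑ k ∈ Finset.range n, ⟪x, e k⟫ • e k with hxn
  set y : X := x - xn with hy
  have horth : ∀ i j : ℕ, ⟪e i, e j⟫ = if i = j then (1:ℝ) else 0 :=
    orthonormal_iff_ite.mp e.orthonormal
  -- coefficients of y vanish below n
  have hcoef : ∀ j, j < n → ⟪y, e j⟫ = 0 := by
    intro j hj
    have : ⟪xn, e j⟫ = ⟪x, e j⟫ := by
      rw [hxn, sum_inner]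
      rw [Finset.sum_eq_single j]
      · rw [real_inner_smul_left, horth j j]; simp
      · intro b _ hb
        rw [real_inner_smul_left, horth b j, if_neg hb, mul_zero]
      · intro h; exact absurd (Finset.mem_range.2 hj) h
    rw [hy, inner_sub_left, this, sub_self]
  -- Pythagoras: ‖x‖² = ‖xn‖² + ‖y‖²
  have hinner_xn_y : ⟪xn, y⟫ = 0 := by
    rw [hxn, sum_inner]
    apply Finset.sum_eq_zero
    intro j hj
    have h0 : ⟪e j, y⟫ = 0 := by
      rw [real_inner_comm]; exact hcoef j (Finset.mem_range.1 hj)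
    rw [real_inner_smul_left, h0, mul_zero]
  have hpyth : ‖x‖ ^ 2 - ‖xn‖ ^ 2 = ‖y‖ ^ 2 := by
    have hx : x = xn + y := by rw [hy]; abel
    have := norm_add_sq_real xn y
    rw [hinner_xn_y] at this
    rw [hx, this]; ring
  -- minimality gives ‖y‖² ≤ L ‖S x - S xn‖
  have hmin' : ‖y‖ ^ 2 ≤ L * ‖S x - S xn‖ := by
    have h1 := hmin xn
    rw [hJ x, hJ xn] at h1
    have h2 : ‖x‖ ^ 2 - ‖xn‖ ^ 2 ≤ Φ (S xn) - Φ (S x) := by linarith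
    have h3 : Φ (S xn) - Φ (S x) ≤ |Φ (S x) - Φ (S xn)| := by
      rw [abs_sub_comm]; exact le_abs_self _
    calc ‖y‖ ^ 2 = ‖x‖ ^ 2 - ‖xn‖ ^ 2 := hpyth.symm
      _ ≤ Φ (S xn) - Φ (S x) := h2
      _ ≤ |Φ (S x) - Φ (S xn)| := h3
      _ ≤ L * ‖S x - S xn‖ := hLip
  -- the sup
  set lamS : ℝ := ⨆ k : ℕ, lam (n + k) with hlamS
  have hbdd : BddAbove (Set.range fun k => lam (n + k)) := by
    have h0 : Filter.Tendsto (fun k => lam (n + k)) Filter.atTop (nhds 0) := by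
      have hcomp : Filter.Tendsto (fun k : ℕ => n + k) Filter.atTop Filter.atTop := by
        simpa [Nat.add_comm] using Filter.tendsto_add_atTop_nat n
      exact hlam_sum.tendsto_atTop_zero.comp hcomp
    exact h0.bddAbove_range
  have hlamS_nonneg : 0 ≤ lamS := le_trans (hlam_nonneg n)
    (by simpa using le_ciSup hbdd 0)
  have hlam_le : ∀ j, n ≤ j → lam j ≤ lamS := by
    intro j hj
    have : lam (n + (j - n)) ≤ lamS := le_ciSup hbdd (j - n)
    rwa [Nat.add_sub_cancel' hj] at this
  -- coefficients of S y
  have hScoef : ∀ j : ℕ, ⟪S y, e j⟫ = Real.sqrt (lam j) * ⟪y, e j⟫ := by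
    intro j
    have h1 : HasSum (fun k => e.repr y k • e k) y := e.hasSum_repr y
    have h2 : HasSum (fun k => e.repr y k • S (e k)) (S y) := by
      simpa only [map_smul] using h1.mapL S
    have h3 : HasSum (fun k => ⟪e.repr y k • S (e k), e j⟫) ⟪S y, e j⟫ := by
      have := h2.mapL (innerSL ℝ (e j))
      simpa [real_inner_comm] using this.congr_fun (fun k => real_inner_comm _ _)
    have h4 : (fun k => ⟪e.repr y k • S (e k), e j⟫) =
        fun k => if k = j then Real.sqrt (lam j) * ⟪y, e j⟫ else 0 := by
      funext k
      rw [hS k, real_inner_smul_left, real_inner_smul_left, horth k j,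
        e.repr_apply_apply]
      split_ifs with h
      · subst h; rw [real_inner_comm]; ring
      · ring
    rw [h4] at h3
    exact h3.unique (hasSum_ite_eq j _)
  -- ‖S y‖² ≤ lamS ‖y‖²
  have hSy : ⟪S y, S y⟫ ≤ lamS * ⟪y, y⟫ := by
    have hA : HasSum (fun j => ⟪S y, e j⟫ * ⟪e j, S y⟫) ⟪S y, S y⟫ :=
      e.hasSum_inner_mul_inner (S y) (S y)
    have hB : HasSum (fun j => lamS * (⟪y, e j⟫ * ⟪e j, y⟫)) (lamS * ⟪y, y⟫) :=
      (e.hasSum_inner_mul_inner y y).mul_left lamS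
    refine hasSum_le ?_ hA hB
    intro j
    have hc1 : ⟪e j, S y⟫ = ⟪S y, e j⟫ := real_inner_comm _ _
    have hc2 : ⟪e j, y⟫ = ⟪y, e j⟫ := real_inner_comm _ _
    rw [hc1, hc2, hScoef j]
    have hsq : Real.sqrt (lam j) * ⟪y, e j⟫ * (Real.sqrt (lam j) * ⟪y, e j⟫) =
        lam j * (⟪y, e j⟫ * ⟪y, e j⟫) := by
      rw [show Real.sqrt (lam j) * ⟪y, e j⟫ * (Real.sqrt (lam j) * ⟪y, e j⟫) =
        (Real.sqrt (lam j) * Real.sqrt (lam j)) * (⟪y, e j⟫ * ⟪y, e j⟫) by ring,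
        Real.mul_self_sqrt (hlam_nonneg j)]
    rw [hsq]
    by_cases hj : j < n
    · rw [hcoef j hj]; ring_nf; simp
    · have := hlam_le j (le_of_not_gt hj)
      have hnn : 0 ≤ ⟪y, e j⟫ * ⟪y, e j⟫ := mul_self_nonneg _
      exact mul_le_mul_of_nonneg_right this hnn
  have hSy_norm : ‖S x - S xn‖ ≤ Real.sqrt lamS * ‖y‖ := by
    have hySxy : S x - S xn = S y := by rw [hy, map_sub]
    rw [hySxy]
    have h1 : ‖S y‖ ^ 2 ≤ lamS * ‖y‖ ^ 2 := by
      rw [← real_inner_self_eq_norm_sq, ← real_inner_self_eq_norm_sq]; exact hSy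
    have h2 : ‖S y‖ = Real.sqrt (‖S y‖ ^ 2) := by
      rw [Real.sqrt_sq (norm_nonneg _)]
    rw [h2]
    calc Real.sqrt (‖S y‖ ^ 2) ≤ Real.sqrt (lamS * ‖y‖ ^ 2) := Real.sqrt_le_sqrt h1
      _ = Real.sqrt lamS * ‖y‖ := by
          rw [Real.sqrt_mul hlamS_nonneg, Real.sqrt_sq (norm_nonneg _)]
  -- conclude
  have hfinal : ‖y‖ ^ 2 ≤ L * (Real.sqrt lamS * ‖y‖) := by
    calc ‖y‖ ^ 2 ≤ L * ‖S x - S xn‖ := hmin'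
      _ ≤ L * (Real.sqrt lamS * ‖y‖) := by
          exact mul_le_mul_of_nonneg_left hSy_norm hL.le
  show ‖y‖ ≤ L * Real.sqrt lamS
  rcases eq_or_lt_of_le (norm_nonneg y) with h0 | h0
  · rw [← h0]
    positivity
  · have := hfinal
    rw [pow_two] at this
    nlinarith
end

section
/- Assume Φ : X → ℝ is nonnegative and locally Lipschitz continuous: for every r > 0 there exists L_r > 0 such that |Φ(z₁) − Φ(z₂)| ≤ L_r ‖z₁ − z₂‖_X whenever ‖z₁‖_X < r and ‖z₂‖_X < r. Then there exists a constant L > 0 such that for every n ∈ ℕ and every x ∈ X minimizing J over X, setting u = Q^{1/2} x and u_n = Q^{1/2} x_n with x_n = Σ_{k=1}^n ⟨x, e_k⟩ e_k, one has ‖u − u_n‖_X ≤ L λ*_n, where λ*_n = sup_{k > n} λ_k. -/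
open scoped RealInnerProductSpace BigOperators

/-- Corollary 3.3: Under the assumptions of Theorem 3.2 (Φ nonnegative
and locally Lipschitz), there is a constant `L > 0` such that for every `n` and every
minimizer `x` of `J`, setting `u = Q^{1/2} x` and `u_n = Q^{1/2} x_n` with
`x_n = ∑_{k<n} ⟪x, e k⟫ • e k`, one has `‖u − u_n‖ ≤ L λ*_n` with
`λ*_n = sup_{k ≥ n} λ_k`. -/
theorem KL_truncation_error_bound_u
    {X : Type*} [NormedAddCommGroup X] [InnerProductSpace ℝ X] [CompleteSpace X]
    (e : HilbertBasis ℕ ℝ X) (lam : ℕ → ℝ)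
    (hlam_nonneg : ∀ k, 0 ≤ lam k) (hlam_sum : Summable lam)
    (Q S : X →L[ℝ] X)
    (hQ : ∀ k, Q (e k) = lam k • e k)
    (hS : ∀ k, S (e k) = Real.sqrt (lam k) • e k)
    (Φ : X → ℝ)
    (hΦ_nonneg : ∀ z : X, 0 ≤ Φ z)
    (hΦ_lip : ∀ r : ℝ, 0 < r → ∃ Lr : ℝ, 0 < Lr ∧
      ∀ z₁ z₂ : X, ‖z₁‖ < r → ‖z₂‖ < r → |Φ z₁ - Φ z₂| ≤ Lr * ‖z₁ - z₂‖)
    (J : X → ℝ) (hJ : ∀ x : X, J x = Φ (S x) + ‖x‖ ^ 2) :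
    ∃ L : ℝ, 0 < L ∧ ∀ n : ℕ, ∀ x : X, (∀ z : X, J x ≤ J z) →
      ‖S x - S (∑ k ∈ Finset.range n, ⟪x, e k⟫ • e k)‖ ≤ L * (⨆ k : ℕ, lam (n + k)) := by
  have hΦ0 : 0 ≤ Φ 0 := hΦ_nonneg 0
  set r : ℝ := ‖S‖ * Real.sqrt (Φ 0) + 1 with hr_def
  have hr_pos : 0 < r := by positivity
  obtain ⟨L, hLpos, hLip⟩ := hΦ_lip r hr_pos
  refine ⟨L, hLpos, fun n x hmin => ?_⟩
  set c : ℕ → ℝ := fun k => ⟪x, e k⟫ with hc_def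
  set xn : X := ∑ k ∈ Finset.range n, c k • e k with hxn_def
  set y : X := x - xn with hy_def
  have hon : ∀ i j : ℕ, ⟪(e i : X), e j⟫ = if i = j then (1:ℝ) else 0 :=
    orthonormal_iff_ite.mp e.orthonormal
  -- norm bound on x from minimality at 0
  have hx_sq : ‖x‖ ^ 2 ≤ Φ 0 := by
    have h0 := hmin 0
    rw [hJ, hJ] at h0
    simp only [map_zero, norm_zero] at h0
    nlinarith [hΦ_nonneg (S x)]
  have hx_norm : ‖x‖ ≤ Real.sqrt (Φ 0) := by
    have := Real.sqrt_le_sqrt hx_sq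
    rwa [Real.sqrt_sq (norm_nonneg x)] at this
  -- inner products of basis vectors with xn
  have hinner_xn : ∀ j, ⟪(e j : X), xn⟫ = if j < n then c j else 0 := by
    intro j
    rw [hxn_def, inner_sum]
    have hterm : ∀ k ∈ Finset.range n, ⟪(e j : X), c k • e k⟫
        = if k = j then c j else 0 := by
      intro k _
      rw [real_inner_smul_right, hon j k]
      by_cases h : k = j
      · subst h; simp
      · rw [if_neg (fun h' => h h'.symm), if_neg h, mul_zero]
    rw [Finset.sum_congr rfl hterm, Finset.sum_ite_eq' (Finset.range n) j (fun _ => c j)]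
    simp [Finset.mem_range]
  have hinner_y : ∀ j, j < n → ⟪(e j : X), y⟫ = 0 := by
    intro j hj
    rw [hy_def, inner_sub_right, hinner_xn j, if_pos hj, real_inner_comm]
    simp [hc_def]
  -- orthogonality and Pythagoras
  have hortho : ⟪xn, y⟫ = 0 := by
    rw [hxn_def, sum_inner]
    refine Finset.sum_eq_zero fun k hk => ?_
    rw [real_inner_smul_left, hinner_y k (Finset.mem_range.mp hk), mul_zero]
  have hpyth : ‖x‖ ^ 2 = ‖xn‖ ^ 2 + ‖y‖ ^ 2 := by
    have hxeq : x = xn + y := by rw [hy_def]; abel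
    rw [hxeq, norm_add_sq_real, hortho]; ring
  have hxn_norm : ‖xn‖ ≤ ‖x‖ := by
    have h2 : ‖xn‖ ^ 2 ≤ ‖x‖ ^ 2 := by nlinarith [sq_nonneg ‖y‖]
    nlinarith [norm_nonneg xn, norm_nonneg x]
  -- the images under S are in the ball of radius r
  have hSx : ‖S x‖ < r := by
    calc ‖S x‖ ≤ ‖S‖ * ‖x‖ := S.le_opNorm x
    _ ≤ ‖S‖ * Real.sqrt (Φ 0) := by
        exact mul_le_mul_of_nonneg_left hx_norm (norm_nonneg _)
    _ < r := by rw [hr_def]; linarith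
  have hSxn : ‖S xn‖ < r := by
    calc ‖S xn‖ ≤ ‖S‖ * ‖xn‖ := S.le_opNorm xn
    _ ≤ ‖S‖ * Real.sqrt (Φ 0) := by
        exact mul_le_mul_of_nonneg_left (hxn_norm.trans hx_norm) (norm_nonneg _)
    _ < r := by rw [hr_def]; linarith
  have hSy : S x - S xn = S y := by rw [hy_def, map_sub]
  -- from minimality at xn and the Lipschitz bound
  have hkey : ‖y‖ ^ 2 ≤ L * ‖S y‖ := by
    have hm := hmin xn
    rw [hJ, hJ] at hm
    have hlip := hLip (S xn) (S x) hSxn hSx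
    have habs : Φ (S xn) - Φ (S x) ≤ |Φ (S xn) - Φ (S x)| := le_abs_self _
    have hnorm : ‖S xn - S x‖ = ‖S y‖ := by
      rw [← hSy, norm_sub_rev]
    nlinarith
  -- the supremum λ*_n
  set lamstar : ℝ := ⨆ k : ℕ, lam (n + k) with hls_def
  have hbdd : BddAbove (Set.range fun k : ℕ => lam (n + k)) := by
    refine ⟨∑' k, lam k, ?_⟩
    rintro _ ⟨k, rfl⟩
    exact Summable.le_tsum hlam_sum (n + k) (fun j _ => hlam_nonneg j)
  have hls_nonneg : 0 ≤ lamstar := (hlam_nonneg (n + 0)).trans (le_ciSup hbdd 0)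
  have hlam_le : ∀ k, n ≤ k → lam k ≤ lamstar := by
    intro k hk
    have : lam (n + (k - n)) ≤ lamstar := le_ciSup hbdd (k - n)
    rwa [Nat.add_sub_cancel' hk] at this
  -- spectral estimate : ‖S y‖² ≤ λ*_n ‖y‖²
  set a : ℕ → ℝ := fun k => ⟪(e k : X), y⟫ with ha_def
  have hSy_repr : ∀ k, ⟪(e k : X), S y⟫ = Real.sqrt (lam k) * a k := by
    intro k
    have h1 : HasSum (fun i => a i • (e i : X)) y := by
      have := e.hasSum_repr y
      convert this using 2 with i
      rw [ha_def, e.repr_apply_apply]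
    have h2 : HasSum (fun i => (Real.sqrt (lam i) * a i) • (e i : X)) (S y) := by
      have := S.hasSum h1
      convert this using 2 with i
      rw [map_smul, hS i, smul_smul, mul_comm]
    have h3 : HasSum (fun i => ⟪(e k : X), (Real.sqrt (lam i) * a i) • (e i : X)⟫)
        ⟪(e k : X), S y⟫ := (innerSL ℝ (e k : X)).hasSum h2
    have h4 : HasSum (fun i => if i = k then Real.sqrt (lam k) * a k else 0)
        ⟪(e k : X), S y⟫ := by
      convert h3 using 2 with i
      rw [real_inner_smul_right, hon k i]
      by_cases h : i = k
      · subst h; simp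
      · rw [if_neg h, if_neg (fun h' => h h'.symm), mul_zero]
    exact ((hasSum_ite_eq k (Real.sqrt (lam k) * a k)).unique h4).symm
  have hSy_sum : HasSum (fun k => lam k * a k ^ 2) (‖S y‖ ^ 2) := by
    have := e.hasSum_inner_mul_inner (S y) (S y)
    rw [real_inner_self_eq_norm_sq] at this
    convert this using 2 with k
    · rfl
    rw [show ⟪S y, (e k : X)⟫ = ⟪(e k : X), S y⟫ from real_inner_comm _ _,
      hSy_repr k]
    linear_combination (-(a k ^ 2)) * Real.sq_sqrt (hlam_nonneg k)
  have hy_sum : HasSum (fun k => a k ^ 2) (‖y‖ ^ 2) := by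
    have := e.hasSum_inner_mul_inner y y
    rw [real_inner_self_eq_norm_sq] at this
    convert this using 2 with k
    · rfl
    rw [show ⟪y, (e k : X)⟫ = ⟪(e k : X), y⟫ from real_inner_comm _ _, ha_def]
    ring
  have hspec : ‖S y‖ ^ 2 ≤ lamstar * ‖y‖ ^ 2 := by
    have h1 : ∀ k, lam k * a k ^ 2 ≤ lamstar * a k ^ 2 := by
      intro k
      rcases lt_or_ge k n with hk | hk
      · rw [ha_def]
        simp only [hinner_y k hk]
        simp
      · exact mul_le_mul_of_nonneg_right (hlam_le k hk) (sq_nonneg _)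
    calc ‖S y‖ ^ 2 = ∑' k, lam k * a k ^ 2 := hSy_sum.tsum_eq.symm
    _ ≤ ∑' k, lamstar * a k ^ 2 :=
        Summable.tsum_le_tsum h1 hSy_sum.summable (hy_sum.summable.mul_left lamstar)
    _ = lamstar * ‖y‖ ^ 2 := by rw [tsum_mul_left, hy_sum.tsum_eq]
  -- conclusion
  rw [hSy]
  rcases eq_or_lt_of_le (norm_nonneg (S y)) with h0 | h0
  · rw [← h0]; positivity
  · have : ‖S y‖ ^ 2 ≤ lamstar * (L * ‖S y‖) :=
      hspec.trans (mul_le_mul_of_nonneg_left hkey hls_nonneg)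
    have h2 : ‖S y‖ * ‖S y‖ ≤ (L * lamstar) * ‖S y‖ := by nlinarith
    exact le_of_mul_le_mul_right (by nlinarith) h0
end

section
/- Assume Φ : X → ℝ is nonnegative and locally Lipschitz continuous: for every r > 0 there exists L_r > 0 such that |Φ(z₁) − Φ(z₂)| ≤ L_r ‖z₁ − z₂‖_X whenever ‖z₁‖_X < r and ‖z₂‖_X < r, and assume J attains its minimum over X. Then there exists a constant L > 0 such that for every n ∈ ℕ and every x_n' ∈ X_n minimizing J over the finite-dimensional subspace X_n (J(x_n') ≤ J(z) for all z ∈ X_n), one has inf_{x ∈ X} J(x) ≤ J(x_n') ≤ inf_{x ∈ X} J(x) + L² λ*_n, where λ*_n = sup_{k > n} λ_k. -/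
open scoped RealInnerProductSpace BigOperators


/-- Diagonal action of `S` on inner products with basis vectors. -/
lemma inner_S_eq {X : Type*} [NormedAddCommGroup X] [InnerProductSpace ℝ X] [CompleteSpace X]
    (e : HilbertBasis ℕ ℝ X) (lam : ℕ → ℝ) (S : X →L[ℝ] X)
    (hS : ∀ k, S (e k) = Real.sqrt (lam k) • e k) (k : ℕ) (x : X) :
    ⟪e k, S x⟫ = Real.sqrt (lam k) * ⟪e k, x⟫ := by
  have hdense : Dense (Submodule.span ℝ (Set.range (e : ℕ → X)) : Set X) := by
    rw [Submodule.dense_iff_topologicalClosure_eq_top]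
    exact e.dense_span
  have := ContinuousLinearMap.ext_on (f := (innerSL ℝ (e k)).comp S)
    (g := Real.sqrt (lam k) • innerSL ℝ (e k)) hdense ?_
  · have h := congrFun (congrArg DFunLike.coe this) x
    simpa using h
  · rintro _ ⟨j, rfl⟩
    simp only [ContinuousLinearMap.comp_apply, ContinuousLinearMap.smul_apply, innerSL_apply_apply,
      hS j, inner_smul_right]
    rcases eq_or_ne k j with rfl | hkj
    · rw [smul_eq_mul]
    · have : ⟪e k, e j⟫ = 0 := e.orthonormal.2 hkj
      rw [this]; simp

lemma norm_S_sq {X : Type*} [NormedAddCommGroup X] [InnerProductSpace ℝ X] [CompleteSpace X]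
    (e : HilbertBasis ℕ ℝ X) (lam : ℕ → ℝ) (hlam_nonneg : ∀ k, 0 ≤ lam k) (S : X →L[ℝ] X)
    (hS : ∀ k, S (e k) = Real.sqrt (lam k) • e k) (x : X) :
    ‖S x‖ ^ 2 = ∑' k, lam k * ⟪e k, x⟫ ^ 2 := by
  have h := e.tsum_inner_mul_inner (S x) (S x)
  have hsq : ∀ k : ℕ, ⟪S x, e k⟫ * ⟪e k, S x⟫ = lam k * ⟪e k, x⟫ ^ 2 := by
    intro k
    have h1 : ⟪S x, e k⟫ = Real.sqrt (lam k) * ⟪e k, x⟫ := by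
      rw [real_inner_comm]; exact inner_S_eq e lam S hS k x
    rw [h1, inner_S_eq e lam S hS k x]
    linear_combination (⟪e k, x⟫ ^ 2) * Real.sq_sqrt (hlam_nonneg k)
  rw [real_inner_self_eq_norm_sq] at h
  rw [← h]
  exact tsum_congr fun k => hsq k

lemma norm_sq_tsum {X : Type*} [NormedAddCommGroup X] [InnerProductSpace ℝ X] [CompleteSpace X]
    (e : HilbertBasis ℕ ℝ X) (x : X) : ‖x‖ ^ 2 = ∑' k, ⟪e k, x⟫ ^ 2 := by
  have h := e.tsum_inner_mul_inner x x
  rw [real_inner_self_eq_norm_sq] at h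
  rw [← h]
  refine tsum_congr fun k => ?_
  have h1 : ⟪x, e k⟫ = ⟪e k, x⟫ := real_inner_comm _ _
  rw [h1]; ring

lemma summable_inner_sq {X : Type*} [NormedAddCommGroup X] [InnerProductSpace ℝ X]
    [CompleteSpace X] (e : HilbertBasis ℕ ℝ X) (x : X) :
    Summable fun k => ⟪e k, x⟫ ^ 2 := by
  refine (e.summable_inner_mul_inner x x).congr fun k => ?_
  have h1 : ⟪x, e k⟫ = ⟪e k, x⟫ := real_inner_comm _ _
  rw [h1]; ring

lemma summable_lam_inner_sq {X : Type*} [NormedAddCommGroup X] [InnerProductSpace ℝ X]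
    [CompleteSpace X] (e : HilbertBasis ℕ ℝ X) (lam : ℕ → ℝ) (hlam_nonneg : ∀ k, 0 ≤ lam k)
    (S : X →L[ℝ] X) (hS : ∀ k, S (e k) = Real.sqrt (lam k) • e k) (x : X) :
    Summable fun k => lam k * ⟪e k, x⟫ ^ 2 := by
  refine (e.summable_inner_mul_inner (S x) (S x)).congr fun k => ?_
  have h1 : ⟪S x, e k⟫ = Real.sqrt (lam k) * ⟪e k, x⟫ := by
    rw [real_inner_comm]; exact inner_S_eq e lam S hS k x
  rw [h1, inner_S_eq e lam S hS k x]
  linear_combination (⟪e k, x⟫ ^ 2) * Real.sq_sqrt (hlam_nonneg k)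

lemma key_tail_bound {X : Type*} [NormedAddCommGroup X] [InnerProductSpace ℝ X] [CompleteSpace X]
    (e : HilbertBasis ℕ ℝ X) (lam : ℕ → ℝ)
    (hlam_nonneg : ∀ k, 0 ≤ lam k) (hlam_sum : Summable lam)
    (S : X →L[ℝ] X) (hS : ∀ k, S (e k) = Real.sqrt (lam k) • e k)
    (n : ℕ) (w : X) (hw : ∀ k, k < n → ⟪e k, w⟫ = 0) :
    ‖S w‖ ^ 2 ≤ (⨆ k : ℕ, lam (n + k)) * ‖w‖ ^ 2 := by
  set ls := ⨆ k : ℕ, lam (n + k) with hls_def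
  have hbdd : BddAbove (Set.range fun k => lam (n + k)) := by
    refine ⟨∑' k, lam k, ?_⟩
    rintro _ ⟨k, rfl⟩
    exact Summable.le_tsum hlam_sum (n + k) fun j _ => hlam_nonneg j
  have hls : ∀ k, n ≤ k → lam k ≤ ls := by
    intro k hk
    have := le_ciSup hbdd (k - n)
    rwa [Nat.add_sub_cancel' hk] at this
  have hls0 : 0 ≤ ls := (hlam_nonneg n).trans (hls n le_rfl)
  rw [norm_S_sq e lam hlam_nonneg S hS w, norm_sq_tsum e w, ← tsum_mul_left]
  refine Summable.tsum_le_tsum (fun k => ?_) (summable_lam_inner_sq e lam hlam_nonneg S hS w)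
    ((summable_inner_sq e w).mul_left ls)
  rcases lt_or_ge k n with hk | hk
  · rw [hw k hk]; simp
  · exact mul_le_mul_of_nonneg_right (hls k hk) (sq_nonneg _)

/-- Corollary 3.4: Assume `Φ` is nonnegative and locally Lipschitz,
and `J` attains its minimum over `X`. Then there is `L > 0` such that for every `n`
and every minimizer `x_n'` of `J` over the finite-dimensional subspace
`X_n = span{e_1, …, e_n}`, one has
`inf_X J ≤ J(x_n') ≤ inf_X J + L² λ*_n` with `λ*_n = sup_{k ≥ n} λ_k`. -/
theorem KL_finite_dim_minimizer_bound
    {X : Type*} [NormedAddCommGroup X] [InnerProductSpace ℝ X] [CompleteSpace X]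
    (e : HilbertBasis ℕ ℝ X) (lam : ℕ → ℝ)
    (hlam_nonneg : ∀ k, 0 ≤ lam k) (hlam_sum : Summable lam)
    (Q S : X →L[ℝ] X)
    (hQ : ∀ k, Q (e k) = lam k • e k)
    (hS : ∀ k, S (e k) = Real.sqrt (lam k) • e k)
    (Φ : X → ℝ)
    (hΦ_nonneg : ∀ z : X, 0 ≤ Φ z)
    (hΦ_lip : ∀ r : ℝ, 0 < r → ∃ Lr : ℝ, 0 < Lr ∧
      ∀ z₁ z₂ : X, ‖z₁‖ < r → ‖z₂‖ < r → |Φ z₁ - Φ z₂| ≤ Lr * ‖z₁ - z₂‖)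
    (J : X → ℝ) (hJ : ∀ x : X, J x = Φ (S x) + ‖x‖ ^ 2)
    (hattain : ∃ xm : X, ∀ z : X, J xm ≤ J z) :
    ∃ L : ℝ, 0 < L ∧ ∀ n : ℕ, ∀ xn' : X,
      xn' ∈ Submodule.span ℝ (e '' Set.Iio n) →
      (∀ z ∈ Submodule.span ℝ (e '' Set.Iio n), J xn' ≤ J z) →
      (⨅ x : X, J x) ≤ J xn' ∧ J xn' ≤ (⨅ x : X, J x) + L ^ 2 * (⨆ k : ℕ, lam (n + k)) := by
  obtain ⟨xm, hxm⟩ := hattain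
  have hbdd_below : BddBelow (Set.range J) := ⟨J xm, by rintro _ ⟨z, rfl⟩; exact hxm z⟩
  have hinf : ⨅ x : X, J x = J xm :=
    le_antisymm (ciInf_le hbdd_below xm) (le_ciInf hxm)
  obtain ⟨Lr, hLr, hlip⟩ := hΦ_lip (‖S‖ * ‖xm‖ + 1) (by positivity)
  refine ⟨Lr, hLr, fun n xn' hmem hmin => ?_⟩
  constructor
  · rw [hinf]; exact hxm xn'
  set K := Submodule.span ℝ (e '' Set.Iio n) with hK
  haveI : FiniteDimensional ℝ K := FiniteDimensional.span_of_finite ℝ ((Set.finite_Iio n).image e)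
  set z := (K.orthogonalProjectionOnto xm : X) with hz
  have hzK : z ∈ K := Submodule.coe_mem _
  have hw : xm - z ∈ Kᗮ := K.sub_starProjection_mem_orthogonal xm
  have hworth : ∀ k, k < n → ⟪e k, xm - z⟫ = 0 := by
    intro k hk
    exact (Submodule.mem_orthogonal K (xm - z)).mp hw (e k)
      (Submodule.subset_span ⟨k, hk, rfl⟩)
  have hinnzero : ⟪z, xm - z⟫ = 0 :=
    (Submodule.mem_orthogonal K (xm - z)).mp hw z hzK
  have hpyth : ‖xm‖ ^ 2 = ‖z‖ ^ 2 + ‖xm - z‖ ^ 2 := by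
    have hx : z + (xm - z) = xm := by abel
    calc ‖xm‖ ^ 2 = ‖z + (xm - z)‖ ^ 2 := by rw [hx]
      _ = ‖z‖ ^ 2 + 2 * ⟪z, xm - z⟫ + ‖xm - z‖ ^ 2 := norm_add_sq_real z (xm - z)
      _ = ‖z‖ ^ 2 + ‖xm - z‖ ^ 2 := by rw [hinnzero]; ring
  have hznorm : ‖z‖ ≤ ‖xm‖ := by nlinarith [norm_nonneg z, norm_nonneg xm, sq_nonneg ‖xm - z‖]
  -- Lipschitz estimate
  have hSz : ‖S z‖ < ‖S‖ * ‖xm‖ + 1 := by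
    have h1 : ‖S z‖ ≤ ‖S‖ * ‖z‖ := S.le_opNorm z
    have h2 : ‖S‖ * ‖z‖ ≤ ‖S‖ * ‖xm‖ := mul_le_mul_of_nonneg_left hznorm (norm_nonneg S)
    linarith
  have hSxm : ‖S xm‖ < ‖S‖ * ‖xm‖ + 1 := by
    have h1 : ‖S xm‖ ≤ ‖S‖ * ‖xm‖ := S.le_opNorm xm
    linarith
  have hlipZ : |Φ (S z) - Φ (S xm)| ≤ Lr * ‖S z - S xm‖ := hlip _ _ hSz hSxm
  have hnormeq : ‖S z - S xm‖ = ‖S (xm - z)‖ := by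
    rw [← map_sub, ← norm_neg, ← map_neg, neg_sub]
  set ls := ⨆ k : ℕ, lam (n + k) with hls_def
  have hls0 : 0 ≤ ls := by
    have hbdd : BddAbove (Set.range fun k => lam (n + k)) := by
      refine ⟨∑' k, lam k, ?_⟩
      rintro _ ⟨k, rfl⟩
      exact Summable.le_tsum hlam_sum (n + k) fun j _ => hlam_nonneg j
    exact (hlam_nonneg (n + 0)).trans (le_ciSup hbdd 0)
  have hkey : ‖S (xm - z)‖ ^ 2 ≤ ls * ‖xm - z‖ ^ 2 :=
    key_tail_bound e lam hlam_nonneg hlam_sum S hS n (xm - z) hworth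
  set t := ‖xm - z‖ with ht
  have hsl : ‖S (xm - z)‖ ≤ Real.sqrt ls * t := by
    have h2 : ‖S (xm - z)‖ ^ 2 ≤ (Real.sqrt ls * t) ^ 2 := by
      rw [mul_pow, Real.sq_sqrt hls0]; exact hkey
    calc ‖S (xm - z)‖ = Real.sqrt (‖S (xm - z)‖ ^ 2) := (Real.sqrt_sq (norm_nonneg _)).symm
      _ ≤ Real.sqrt ((Real.sqrt ls * t) ^ 2) := Real.sqrt_le_sqrt h2
      _ = Real.sqrt ls * t := Real.sqrt_sq (by positivity)
  have hPhi : Φ (S z) ≤ Φ (S xm) + Lr * (Real.sqrt ls * t) := by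
    have h1 : Φ (S z) - Φ (S xm) ≤ Lr * ‖S z - S xm‖ := (abs_le.mp hlipZ).2
    rw [hnormeq] at h1
    have h2 : Lr * ‖S (xm - z)‖ ≤ Lr * (Real.sqrt ls * t) :=
      mul_le_mul_of_nonneg_left hsl hLr.le
    linarith
  have hchain : J xn' ≤ J z := hmin z hzK
  rw [hinf]
  have hJz : J z = Φ (S z) + ‖z‖ ^ 2 := hJ z
  have hJxm : J xm = Φ (S xm) + ‖xm‖ ^ 2 := hJ xm
  have hfinal : Lr * (Real.sqrt ls * t) - t ^ 2 ≤ Lr ^ 2 * ls := by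
    nlinarith [sq_nonneg (2 * t - Lr * Real.sqrt ls), Real.sq_sqrt hls0,
      mul_nonneg (sq_nonneg Lr) hls0]
  calc J xn' ≤ J z := hchain
    _ = Φ (S z) + ‖z‖ ^ 2 := hJz
    _ ≤ Φ (S xm) + Lr * (Real.sqrt ls * t) + (‖xm‖ ^ 2 - t ^ 2) := by
        have : ‖z‖ ^ 2 = ‖xm‖ ^ 2 - t ^ 2 := by rw [hpyth]; ring
        linarith
    _ = J xm + (Lr * (Real.sqrt ls * t) - t ^ 2) := by rw [hJxm]; ring
    _ ≤ J xm + Lr ^ 2 * ls := by linarith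
end

section
/- Let x ∈ X minimize J over X and let x_n = Σ_{k=1}^n ⟨x, e_k⟩ e_k. Suppose L > 0 satisfies |Φ(Q^{1/2} x) − Φ(Q^{1/2} x_n)| ≤ L ‖Q^{1/2} x − Q^{1/2} x_n‖_X. Then J(x_n) ≤ J(x) + L² λ*_n, where λ*_n = sup_{k > n} λ_k; consequently any minimizer x_n' of J over X_n = span{e_1, …, e_n} satisfies J(x) ≤ J(x_n') ≤ J(x) + L² λ*_n. -/
open scoped RealInnerProductSpace BigOperators

/-- Let `x` minimize `J(z) = Φ(Q^{1/2} z) + ‖z‖²` over `X` and let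
`x_n = ∑_{k<n} ⟪x, e k⟫ • e k`. If `L > 0` satisfies
`|Φ(Q^{1/2} x) − Φ(Q^{1/2} x_n)| ≤ L ‖Q^{1/2} x − Q^{1/2} x_n‖`, then
`J(x_n) ≤ J(x) + L² λ*_n` with `λ*_n = sup_{k ≥ n} λ_k`; consequently any minimizer
`x_n'` of `J` over `X_n = span{e_1, …, e_n}` satisfies
`J(x) ≤ J(x_n') ≤ J(x) + L² λ*_n`. -/
theorem KL_finite_dim_value_bound
    {X : Type*} [NormedAddCommGroup X] [InnerProductSpace ℝ X] [CompleteSpace X]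
    (e : HilbertBasis ℕ ℝ X) (lam : ℕ → ℝ)
    (hlam_nonneg : ∀ k, 0 ≤ lam k) (hlam_sum : Summable lam)
    (Q S : X →L[ℝ] X)
    (hQ : ∀ k, Q (e k) = lam k • e k)
    (hS : ∀ k, S (e k) = Real.sqrt (lam k) • e k)
    (Φ : X → ℝ)
    (J : X → ℝ) (hJ : ∀ z : X, J z = Φ (S z) + ‖z‖ ^ 2)
    (x : X) (hmin : ∀ z : X, J x ≤ J z) (n : ℕ)
    (L : ℝ) (hL : 0 < L)
    (hLip : |Φ (S x) - Φ (S (∑ k ∈ Finset.range n, ⟪x, e k⟫ • e k))| ≤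
      L * ‖S x - S (∑ k ∈ Finset.range n, ⟪x, e k⟫ • e k)‖) :
    J (∑ k ∈ Finset.range n, ⟪x, e k⟫ • e k) ≤ J x + L ^ 2 * (⨆ k : ℕ, lam (n + k)) ∧
    ∀ xn' : X, xn' ∈ Submodule.span ℝ (e '' Set.Iio n) →
      (∀ z ∈ Submodule.span ℝ (e '' Set.Iio n), J xn' ≤ J z) →
      J x ≤ J xn' ∧ J xn' ≤ J x + L ^ 2 * (⨆ k : ℕ, lam (n + k)) := by
  classical
  set xn : X := ∑ k ∈ Finset.range n, ⟪x, e k⟫ • e k with hxn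
  set y : X := x - xn with hy
  set lamstar : ℝ := ⨆ k : ℕ, lam (n + k) with hls
  have hee : ∀ i j, ⟪e i, e j⟫ = if i = j then (1:ℝ) else 0 :=
    orthonormal_iff_ite.mp e.orthonormal
  -- inner products of xn with e k
  have hxn_inner : ∀ k, ⟪xn, e k⟫ = if k < n then ⟪x, e k⟫ else 0 := by
    intro k
    rw [hxn, sum_inner]
    simp only [real_inner_smul_left, hee, mul_ite, mul_one, mul_zero]
    rw [Finset.sum_ite_eq' (Finset.range n) k]
    simp [Finset.mem_range]
  have hy_inner : ∀ k, ⟪y, e k⟫ = if k < n then 0 else ⟪x, e k⟫ := by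
    intro k
    rw [hy, inner_sub_left, hxn_inner]
    by_cases h : k < n <;> simp [h]
  -- inner products of S z with e k
  have hSinner : ∀ z : X, ∀ k, ⟪S z, e k⟫ = Real.sqrt (lam k) * ⟪z, e k⟫ := by
    intro z k
    have h1 := (e.hasSum_repr z).mapL S
    have h2 := h1.mapL (innerSL ℝ (e k))
    have h3 : ∀ j, (innerSL ℝ (e k)) (S (e.repr z j • e j))
        = if j = k then Real.sqrt (lam k) * ⟪z, e k⟫ else 0 := by
      intro j
      simp only [innerSL_apply_apply, map_smul, hS, inner_smul_right, smul_eq_mul, hee]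
      by_cases h : j = k
      · subst h
        simp only [if_true, mul_one, e.repr_apply_apply]
        rw [real_inner_comm]
        ring
      · simp [Ne.symm h, h]
    have h4 : HasSum (fun j => if j = k then Real.sqrt (lam k) * ⟪z, e k⟫ else 0)
        (⟪e k, S z⟫) := by
      refine HasSum.congr_fun ?_ fun j => (h3 j).symm
      simpa using h2
    have h5 := h4.unique (hasSum_ite_eq k _)
    rw [real_inner_comm]
    exact h5
  -- Parseval style sums
  have hParseval : ∀ z : X, HasSum (fun k => ⟪z, e k⟫ ^ 2) (‖z‖ ^ 2) := by
    intro z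
    have h := e.hasSum_inner_mul_inner z z
    have heq : ∀ k, ⟪z, e k⟫ ^ 2 = ⟪z, e k⟫ * ⟪e k, z⟫ := by
      intro k; rw [real_inner_comm (e k) z]; ring
    rw [real_inner_self_eq_norm_sq] at h
    exact h.congr_fun heq
  -- key quantities
  have hbS : HasSum (fun k => lam k * ⟪y, e k⟫ ^ 2) (‖S y‖ ^ 2) := by
    have := hParseval (S y)
    have heq : ∀ k, ⟪S y, e k⟫ ^ 2 = lam k * ⟪y, e k⟫ ^ 2 := by
      intro k
      rw [hSinner, mul_pow, Real.sq_sqrt (hlam_nonneg k)]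
    simpa only [heq] using this
  have hby : HasSum (fun k => ⟪y, e k⟫ ^ 2) (‖y‖ ^ 2) := hParseval y
  -- bddAbove and lamstar nonneg
  have hsum' : Summable fun k => lam (n + k) := by
    have := (summable_nat_add_iff n).mpr hlam_sum
    simpa [add_comm] using this
  have hbdd : BddAbove (Set.range fun k => lam (n + k)) := by
    refine ⟨∑' k, lam (n + k), ?_⟩
    rintro _ ⟨k, rfl⟩
    exact Summable.le_tsum hsum' k (fun j _ => hlam_nonneg _)
  have hls_nonneg : 0 ≤ lamstar := le_trans (hlam_nonneg n) (by
    simpa using le_ciSup hbdd 0)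
  have hlam_le : ∀ k, n ≤ k → lam k ≤ lamstar := by
    intro k hk
    have : lam (n + (k - n)) ≤ lamstar := le_ciSup hbdd (k - n)
    rwa [Nat.add_sub_cancel' hk] at this
  -- compare the two sums
  have hcomp : ‖S y‖ ^ 2 ≤ lamstar * ‖y‖ ^ 2 := by
    have hmul : HasSum (fun k => lamstar * ⟪y, e k⟫ ^ 2) (lamstar * ‖y‖ ^ 2) :=
      hby.mul_left lamstar
    refine hasSum_le ?_ hbS hmul
    intro k
    by_cases h : k < n
    · simp [hy_inner k, h]
    · exact mul_le_mul_of_nonneg_right (hlam_le k (Nat.le_of_not_lt h)) (sq_nonneg _)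
  -- Pythagoras : ‖x‖² - ‖xn‖² = ‖y‖²
  have hpyth : ‖x‖ ^ 2 = ‖y‖ ^ 2 + ‖xn‖ ^ 2 := by
    have horth : ⟪y, xn⟫ = 0 := by
      rw [hxn, inner_sum]
      refine Finset.sum_eq_zero fun k hk => ?_
      rw [real_inner_smul_right, hy_inner k]
      simp [Finset.mem_range.mp hk]
    have horth2 : ⟪xn, y⟫ = 0 := by rw [real_inner_comm]; exact horth
    have : x = y + xn := by rw [hy]; abel
    rw [this, ← real_inner_self_eq_norm_sq, ← real_inner_self_eq_norm_sq,
      ← real_inner_self_eq_norm_sq, inner_add_add_self, horth, horth2]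
    ring
  -- main bound
  have hmain : J xn ≤ J x + L ^ 2 * lamstar := by
    have hSxy : S x - S xn = S y := by rw [hy, map_sub]
    have ha : ‖S y‖ ≤ Real.sqrt lamstar * ‖y‖ := by
      have h1 : (Real.sqrt lamstar * ‖y‖) ^ 2 = lamstar * ‖y‖ ^ 2 := by
        rw [mul_pow, Real.sq_sqrt hls_nonneg]
      have h2 : 0 ≤ Real.sqrt lamstar * ‖y‖ :=
        mul_nonneg (Real.sqrt_nonneg _) (norm_nonneg _)
      nlinarith [norm_nonneg (S y), hcomp]
    have hPhi : Φ (S xn) - Φ (S x) ≤ L * ‖S y‖ := by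
      have := neg_abs_le (Φ (S x) - Φ (S xn))
      rw [hSxy] at hLip
      linarith
    have hs2 : Real.sqrt lamstar ^ 2 = lamstar := Real.sq_sqrt hls_nonneg
    have hLa : L * ‖S y‖ ≤ L * (Real.sqrt lamstar * ‖y‖) :=
      mul_le_mul_of_nonneg_left ha hL.le
    rw [hJ xn, hJ x]
    nlinarith [sq_nonneg (‖y‖ - L * Real.sqrt lamstar), hpyth]
  refine ⟨hmain, fun xn' hmem hminn => ⟨hmin xn', ?_⟩⟩
  have hxn_mem : xn ∈ Submodule.span ℝ (e '' Set.Iio n) := by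
    rw [hxn]
    refine Submodule.sum_mem _ fun k hk => Submodule.smul_mem _ _ ?_
    exact Submodule.subset_span ⟨k, Finset.mem_range.mp hk, rfl⟩
  exact le_trans (hminn xn hxn_mem) hmain
end
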